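/- arXiv:1402.0947 — 3 statements merged into one kernel-verified Lean document; each statement's English description precedes it below -/
import Mathlib

section
/- The Rényi entropy of order β of the Gumbel distribution with density λ(x) = e^{-x} e^{-e^{-x}} equals (1/(1-β)) · (log Γ(β) − β log β), for any β > 0 with β ≠ 1. -/
open Real MeasureTheory

/-! The substitution `t = exp (-x)` turns `∫ λ(x)^β dx` into the Gamma-type integral
`∫₀^∞ t^(β-1) e^(-β t) dt = β^(-β) Γ(β)`, whose logarithm is `log Γ(β) - β log β`. -/

theorem integral_exp_smul_comp_exp {E : Type*} [NormedAddCommGroup E] [NormedSpace ℝ E]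
    (g : ℝ → E) : ∫ x, exp x • g (exp x) = ∫ t in Set.Ioi 0, g t := by
  rw [← range_exp, ← Set.image_univ, integral_image_eq_integral_abs_deriv_smul MeasurableSet.univ
    (fun x _ ↦ (hasDerivAt_exp x).hasDerivWithinAt) exp_injective.injOn, setIntegral_univ]
  simp only [abs_of_pos (exp_pos _)]

theorem integral_exp_neg_smul_comp_exp_neg {E : Type*} [NormedAddCommGroup E] [NormedSpace ℝ E]
    (g : ℝ → E) : ∫ x, exp (-x) • g (exp (-x)) = ∫ t in Set.Ioi 0, g t := by
  rw [integral_neg_eq_self (fun x ↦ exp x • g (exp x)), integral_exp_smul_comp_exp]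

theorem gumbel_density_rpow_eq (β x : ℝ) :
    (exp (-x) * exp (-exp (-x))) ^ β =
      exp (-x) * (exp (-x) ^ (β - 1) * exp (-(β * exp (-x)))) := by
  simp only [← exp_mul, ← exp_add]
  ring_nf

theorem integral_gumbel_density_rpow {β : ℝ} (hβ : 0 < β) :
    ∫ x, (exp (-x) * exp (-exp (-x))) ^ β = (1 / β) ^ β * Gamma β := by
  simp_rw [gumbel_density_rpow_eq]
  exact (integral_exp_neg_smul_comp_exp_neg (fun t ↦ t ^ (β - 1) * exp (-(β * t)))).trans
    (integral_rpow_mul_exp_neg_mul_Ioi hβ hβ)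

theorem renyi_entropy_gumbel_general (β : ℝ) (hβ : 0 < β) :
    (1 / (1 - β)) * Real.log (∫ x : ℝ, (Real.exp (-x) * Real.exp (-Real.exp (-x))) ^ β) =
      (1 / (1 - β)) * (Real.log (Real.Gamma β) - β * Real.log β) := by
  rw [integral_gumbel_density_rpow hβ, log_mul (by positivity) (Gamma_pos_of_pos hβ).ne',
    log_rpow (by positivity), log_div one_ne_zero hβ.ne', log_one]
  ring

/-- The Rényi entropy of order `β` of the Gumbel distribution with density
`λ(x) = e^{-x} e^{-e^{-x}}` equals `(1/(1-β)) (log Γ(β) - β log β)` for `β > 0`, `β ≠ 1`. -/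
theorem renyi_entropy_gumbel (β : ℝ) (hβ : 0 < β) (hβ1 : β ≠ 1) :
    (1 / (1 - β)) * Real.log (∫ x : ℝ, (Real.exp (-x) * Real.exp (-Real.exp (-x))) ^ β) =
      (1 / (1 - β)) * (Real.log (Real.Gamma β) - β * Real.log β) :=
  renyi_entropy_gumbel_general β hβ
end

section
/- The Rényi entropy of order β of the Fréchet distribution with parameter α > 0 (density φ_α(x) = α x^{−α−1} e^{−x^{−α}} for x > 0) equals (1/(1−β)) · ((β−1) log α − ((β−1)(α+1)/α + 1) log β + log Γ((α+1)(β−1)/α + 1)), provided β > 1/(α+1) and β ≠ 1. -/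
/-!
Raising the Fréchet density to the power `β` gives `α ^ β x ^ (-(α+1)β) exp (-β x ^ (-α))`.
The substitution `x ↦ x⁻¹` turns its integral over `(0, ∞)` into the generalized Gamma integral
`∫ x ^ ((α+1)β - 2) exp (-β x ^ α) = β ^ (-s) α⁻¹ Γ(s)` with `s = ((α+1)β - 1)/α`, which is finite
exactly when `β > 1/(α+1)`; taking logarithms gives the formula.
-/

open Real MeasureTheory Set

lemma frechet_integrand_rpow {α x : ℝ} (hα : 0 ≤ α) (hx : 0 < x) (β : ℝ) :
    (α * x ^ (-(α + 1)) * exp (-x ^ (-α))) ^ β =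
      α ^ β * (x ^ (-((α + 1) * β)) * exp (-β * x ^ (-α))) := by
  rw [mul_rpow (by positivity) (exp_pos _).le, mul_rpow hα (rpow_nonneg hx.le _),
    ← rpow_mul hx.le, ← exp_mul]
  ring_nf

lemma integral_rpow_neg_mul_exp_neg_mul_rpow_neg (p a b : ℝ) :
    ∫ x in Ioi (0 : ℝ), x ^ (-p) * exp (-b * x ^ (-a)) =
      ∫ x in Ioi (0 : ℝ), x ^ (p - 2) * exp (-b * x ^ a) := by
  rw [← integral_comp_rpow_Ioi _ (show (-1 : ℝ) ≠ 0 by norm_num)]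
  refine setIntegral_congr_fun measurableSet_Ioi fun x (hx : 0 < x) => ?_
  rw [smul_eq_mul, ← rpow_mul hx.le, ← rpow_mul hx.le, abs_neg, abs_one, one_mul,
    ← mul_assoc, ← rpow_add hx]
  ring_nf

lemma one_lt_add_one_mul_of_inv_lt {α β : ℝ} (hα : 0 < α) (hβ : 1 / (α + 1) < β) :
    1 < (α + 1) * β := by
  rwa [div_lt_iff₀ (by linarith), mul_comm] at hβ

lemma integral_frechet_rpow {α β : ℝ} (hα : 0 < α) (hβ : 1 / (α + 1) < β) :
    ∫ x in Ioi (0 : ℝ), (α * x ^ (-(α + 1)) * exp (-x ^ (-α))) ^ β =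
      α ^ (β - 1) * (β ^ (-((α + 1) * (β - 1) / α + 1)) *
        Gamma ((α + 1) * (β - 1) / α + 1)) := by
  have hβ0 : 0 < β := (by positivity : (0 : ℝ) < 1 / (α + 1)).trans hβ
  have hq : -1 < (α + 1) * β - 2 := by linarith [one_lt_add_one_mul_of_inv_lt hα hβ]
  have hs : ((α + 1) * β - 2 + 1) / α = (α + 1) * (β - 1) / α + 1 := by
    field_simp
    ring
  calc ∫ x in Ioi (0 : ℝ), (α * x ^ (-(α + 1)) * exp (-x ^ (-α))) ^ β
      = ∫ x in Ioi (0 : ℝ), α ^ β * (x ^ (-((α + 1) * β)) * exp (-β * x ^ (-α))) :=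
        setIntegral_congr_fun measurableSet_Ioi fun x hx => frechet_integrand_rpow hα.le hx β
    _ = α ^ β * ∫ x in Ioi (0 : ℝ), x ^ ((α + 1) * β - 2) * exp (-β * x ^ α) := by
        rw [integral_const_mul, integral_rpow_neg_mul_exp_neg_mul_rpow_neg]
    _ = α ^ β * (β ^ (-((α + 1) * (β - 1) / α + 1)) * (1 / α) *
          Gamma ((α + 1) * (β - 1) / α + 1)) := by
        rw [integral_rpow_mul_exp_neg_mul_rpow hα hq hβ0, neg_div, hs]
    _ = _ := by
        rw [rpow_sub hα, rpow_one]
        field_simp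

theorem renyi_entropy_frechet_general (α β : ℝ) (hα : 0 < α) (hβ : 1 / (α + 1) < β) :
    (1 / (1 - β)) *
        Real.log (∫ x in Set.Ioi (0 : ℝ), (α * x ^ (-(α + 1)) * Real.exp (-x ^ (-α))) ^ β) =
      (1 / (1 - β)) *
        ((β - 1) * Real.log α - ((β - 1) * (α + 1) / α + 1) * Real.log β +
          Real.log (Real.Gamma ((α + 1) * (β - 1) / α + 1))) := by
  have hβ0 : 0 < β := (by positivity : (0 : ℝ) < 1 / (α + 1)).trans hβ
  have hΓ : 0 < Gamma ((α + 1) * (β - 1) / α + 1) := by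
    have : 0 < (α + 1) * β - 1 := by linarith [one_lt_add_one_mul_of_inv_lt hα hβ]
    refine Gamma_pos_of_pos ?_
    calc (0 : ℝ) < ((α + 1) * β - 1) / α := by positivity
      _ = _ := by field_simp; ring
  rw [integral_frechet_rpow hα hβ, log_mul (by positivity) (by positivity),
    log_mul (by positivity) hΓ.ne', log_rpow hα, log_rpow hβ0]
  ring

/-- The Rényi entropy of order `β` of the Fréchet distribution with parameter `α > 0`. -/
theorem renyi_entropy_frechet (α β : ℝ) (hα : 0 < α) (hβ : 1 / (α + 1) < β) (hβ1 : β ≠ 1) :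
    (1 / (1 - β)) *
        Real.log (∫ x in Set.Ioi (0 : ℝ), (α * x ^ (-(α + 1)) * Real.exp (-x ^ (-α))) ^ β) =
      (1 / (1 - β)) *
        ((β - 1) * Real.log α - ((β - 1) * (α + 1) / α + 1) * Real.log β +
          Real.log (Real.Gamma ((α + 1) * (β - 1) / α + 1))) :=
  renyi_entropy_frechet_general α β hα hβ
end

section
/- The Rényi entropy of order β of the Weibull extreme-value distribution with parameter α (density ψ_α(x) = α |x|^{α−1} e^{−|x|^α} for x < 0) equals (1/(1−β)) · ((β−1) log α − ((β−1)(α−1)/α + 1) log β + log Γ((α−1)(β−1)/α + 1)), provided α > max(0, (β−1)/β) and β > 0, β ≠ 1. -/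
open Real MeasureTheory Set

/-!
Reflecting `x ↦ -x` moves the integral of `ψ_α ^ β` to `(0, ∞)`, where the integrand is
`α ^ β x ^ ((α - 1) β) e ^ (-β x ^ α)`. The substitution `u = β x ^ α` turns this into a
Gamma integral (`integral_rpow_mul_exp_neg_mul_rpow`), with parameter
`s = ((α - 1) β + 1) / α = (α - 1)(β - 1) / α + 1`; the entropy is the logarithm of the result.
-/

theorem integral_Iio_eq_integral_Ioi_comp_neg {E : Type*} [NormedAddCommGroup E]
    [NormedSpace ℝ E] (c : ℝ) (f : ℝ → E) :
    ∫ x in Iio c, f x = ∫ x in Ioi (-c), f (-x) := by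
  rw [integral_comp_neg_Ioi, neg_neg, integral_Iic_eq_integral_Iio]

theorem weibull_rpow_comp_neg {α x : ℝ} (β : ℝ) (hα : 0 ≤ α) (hx : 0 < x) :
    (α * |-x| ^ (α - 1) * exp (-|-x| ^ α)) ^ β =
      α ^ β * (x ^ ((α - 1) * β) * exp (-β * x ^ α)) := by
  rw [abs_neg, abs_of_pos hx, mul_rpow (by positivity) (exp_pos _).le,
    mul_rpow hα (by positivity), ← rpow_mul hx.le, ← exp_mul, mul_assoc]
  ring_nf

theorem integral_Iio_weibull_rpow {α β : ℝ} (hα : 0 < α) (hβ : 0 < β)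
    (hs : 0 < (α - 1) * (β - 1) / α + 1) :
    ∫ x in Iio 0, (α * |x| ^ (α - 1) * exp (-|x| ^ α)) ^ β =
      α ^ (β - 1) * β ^ (-((α - 1) * (β - 1) / α + 1)) *
        Gamma ((α - 1) * (β - 1) / α + 1) := by
  have hs_eq : ((α - 1) * β + 1) / α = (α - 1) * (β - 1) / α + 1 := by
    field_simp
    ring
  have hq : -1 < (α - 1) * β := by
    rw [← hs_eq] at hs
    linarith [(div_pos_iff_of_pos_right hα).mp hs]
  rw [integral_Iio_eq_integral_Ioi_comp_neg, neg_zero,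
    setIntegral_congr_fun measurableSet_Ioi fun x hx => weibull_rpow_comp_neg β hα.le hx,
    integral_const_mul, integral_rpow_mul_exp_neg_mul_rpow hα hq hβ, neg_div, hs_eq,
    rpow_sub hα, rpow_one]
  field_simp

theorem weibull_renyi_shape_pos {α β : ℝ} (hβ : 0 < β) (hα : max 0 ((β - 1) / β) < α) :
    0 < (α - 1) * (β - 1) / α + 1 := by
  obtain ⟨hα0, hαβ⟩ := max_lt_iff.mp hα
  have : β - 1 < α * β := (div_lt_iff₀ hβ).mp hαβ
  rw [div_add_one hα0.ne']
  exact div_pos (by linarith) hα0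

theorem renyi_entropy_weibull_general (α β : ℝ) (hβ : 0 < β)
    (hα : max 0 ((β - 1) / β) < α) :
    (1 / (1 - β)) *
        Real.log (∫ x in Set.Iio (0 : ℝ), (α * |x| ^ (α - 1) * Real.exp (-|x| ^ α)) ^ β) =
      (1 / (1 - β)) *
        ((β - 1) * Real.log α - ((β - 1) * (α - 1) / α + 1) * Real.log β +
          Real.log (Real.Gamma ((α - 1) * (β - 1) / α + 1))) := by
  have hα0 : 0 < α := (le_max_left _ _).trans_lt hα
  have hs := weibull_renyi_shape_pos hβ hα
  have hΓ := Gamma_pos_of_pos hs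
  rw [integral_Iio_weibull_rpow hα0 hβ hs, log_mul (by positivity) hΓ.ne',
    log_mul (by positivity) (by positivity), log_rpow hα0, log_rpow hβ]
  ring

/-- The Rényi entropy of order `β` of the Weibull extreme-value distribution with
parameter `α`. -/
theorem renyi_entropy_weibull (α β : ℝ) (hβ : 0 < β) (hβ1 : β ≠ 1)
    (hα : max 0 ((β - 1) / β) < α) :
    (1 / (1 - β)) *
        Real.log (∫ x in Set.Iio (0 : ℝ), (α * |x| ^ (α - 1) * Real.exp (-|x| ^ α)) ^ β) =
      (1 / (1 - β)) *
        ((β - 1) * Real.log α - ((β - 1) * (α - 1) / α + 1) * Real.log β +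
          Real.log (Real.Gamma ((α - 1) * (β - 1) / α + 1))) :=
  renyi_entropy_weibull_general α β hβ hα
end
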